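/- Let p ∈ (0,1/2), Q ≥ 1 an integer, Δ = log(p/(1-p)) < 0, and K ~ Binomial(2Q, p). Then for every integer κ ≥ 1, E[tanh^{2κ}(|Q - K|·|Δ|)] = Σ_{i=0}^{Q-1} binom(2Q,i) C^i S_{r_i}^{1-2κ} D_{r_i}^{2κ}, where C = p(1-p), rᵢ = 2Q-2i, S_r = (1-p)^r + p^r, D_r = (1-p)^r - p^r. -/

import Mathlib

/-! Pair the terms `i` and `2Q - i`: they carry the same factor `tanh (|Q - i| |Δ|) ^ (2κ)`, their
binomial weights add up to `binom(2Q, i) C^i S_{2Q-2i}`, and `tanh (m |Δ|) = D_{2m} / S_{2m}` since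
`exp |Δ| = (1 - p) / p`. The middle term `i = Q` vanishes because `tanh 0 = 0`. -/

open Finset Real

theorem Finset.sum_range_two_mul_add_one_eq_sum_reflect {M : Type*} [AddCommMonoid M]
    (f : ℕ → M) (Q : ℕ) :
    ∑ i ∈ range (2 * Q + 1), f i = ∑ i ∈ range Q, (f i + f (2 * Q - i)) + f Q := by
  rw [show 2 * Q + 1 = Q + (Q + 1) by ring, sum_range_add, sum_range_succ', sum_add_distrib,
    add_zero, ← add_assoc, ← sum_range_reflect (fun i => f (2 * Q - i))]
  refine congrArg₂ _ (congrArg _ (sum_congr rfl fun i hi => congrArg f ?_)) rfl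
  simp only [mem_range] at hi
  omega

theorem Real.tanh_natCast_mul_log_div {a b : ℝ} (ha : 0 < a) (hb : 0 < b) (m : ℕ) :
    tanh (m * log (a / b)) = (a ^ (2 * m) - b ^ (2 * m)) / (a ^ (2 * m) + b ^ (2 * m)) := by
  have hexp : exp (m * log (a / b)) = (a / b) ^ m := by
    rw [exp_nat_mul, exp_log (div_pos ha hb)]
  rw [tanh_eq_sinh_div_cosh, sinh_eq, cosh_eq, exp_neg, hexp, div_pow, pow_mul, pow_mul, inv_div]
  field_simp
  ring

theorem abs_natCast_sub_reflect {i Q : ℕ} (hi : i ≤ Q) :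
    |(Q : ℝ) - ((2 * Q - i : ℕ) : ℝ)| = |(Q : ℝ) - i| := by
  rw [Nat.cast_sub (by omega), ← abs_neg]
  push_cast
  ring_nf

theorem pow_mul_pow_add_pow_mul_pow_reflect {R : Type*} [CommSemiring R] (a b : R) {i Q : ℕ}
    (hi : i ≤ Q) :
    a ^ i * b ^ (2 * Q - i) + a ^ (2 * Q - i) * b ^ i =
      (a * b) ^ i * (b ^ (2 * Q - 2 * i) + a ^ (2 * Q - 2 * i)) := by
  rw [show 2 * Q - i = i + (2 * Q - 2 * i) by omega]
  ring

theorem mul_div_pow_eq_zpow_one_sub_mul_pow {K : Type*} [Field K] {S : K} (hS : S ≠ 0)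
    (D : K) (n : ℕ) :
    S * (D / S) ^ n = S ^ ((1 : ℤ) - n) * D ^ n := by
  rw [zpow_sub₀ hS, zpow_one, zpow_natCast, div_pow]
  ring

theorem binomial_tanh_even_moments_general (p : ℝ) (hp : p ∈ Set.Ioo (0:ℝ) (1/2))
    (Q : ℕ) (κ : ℕ) (hκ : 1 ≤ κ) :
    ∑ i ∈ Finset.range (2 * Q + 1),
        (Nat.choose (2 * Q) i : ℝ) * p ^ i * (1 - p) ^ (2 * Q - i) *
          (Real.tanh (|(Q : ℝ) - (i : ℝ)| * |Real.log (p / (1 - p))|)) ^ (2 * κ) =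
      ∑ i ∈ Finset.range Q,
        (Nat.choose (2 * Q) i : ℝ) * (p * (1 - p)) ^ i *
          ((1 - p) ^ (2 * Q - 2 * i) + p ^ (2 * Q - 2 * i)) ^ ((1 : ℤ) - 2 * κ) *
          ((1 - p) ^ (2 * Q - 2 * i) - p ^ (2 * Q - 2 * i)) ^ (2 * κ) := by
  obtain ⟨hp0, hp_half⟩ := hp
  have hq : 0 < 1 - p := by linarith
  have hlog : |log (p / (1 - p))| = log ((1 - p) / p) := by
    rw [← inv_div, log_inv, abs_neg,
      abs_of_nonneg (log_nonneg ((one_le_div hp0).2 (by linarith)))]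
  rw [sum_range_two_mul_add_one_eq_sum_reflect, sub_self, abs_zero, zero_mul, tanh_zero,
    zero_pow (by omega), mul_zero, add_zero]
  refine sum_congr rfl fun i hi => ?_
  have hiQ : i ≤ Q := (mem_range.1 hi).le
  set S := (1 - p) ^ (2 * Q - 2 * i) + p ^ (2 * Q - 2 * i)
  set D := (1 - p) ^ (2 * Q - 2 * i) - p ^ (2 * Q - 2 * i)
  have hS : 0 < S := by positivity
  have htanh : tanh (|(Q : ℝ) - i| * |log (p / (1 - p))|) = D / S := by
    rw [← Nat.cast_sub hiQ, Nat.abs_cast, hlog, tanh_natCast_mul_log_div hq hp0,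
      show 2 * (Q - i) = 2 * Q - 2 * i by omega]
  rw [abs_natCast_sub_reflect hiQ, Nat.choose_symm (by omega), htanh,
    Nat.sub_sub_self (by omega)]
  calc _ = ((2 * Q).choose i : ℝ) *
          (p ^ i * (1 - p) ^ (2 * Q - i) + p ^ (2 * Q - i) * (1 - p) ^ i) * (D / S) ^ (2 * κ) := by
        ring
    _ = ((2 * Q).choose i : ℝ) * (p * (1 - p)) ^ i * (S * (D / S) ^ (2 * κ)) := by
      rw [pow_mul_pow_add_pow_mul_pow_reflect _ _ hiQ]
      ring
    _ = _ := by
      rw [mul_div_pow_eq_zpow_one_sub_mul_pow hS.ne']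
      push_cast
      ring

theorem binomial_tanh_even_moments (p : ℝ) (hp : p ∈ Set.Ioo (0:ℝ) (1/2))
    (Q : ℕ) (hQ : 1 ≤ Q) (κ : ℕ) (hκ : 1 ≤ κ) :
    ∑ i ∈ Finset.range (2 * Q + 1),
        (Nat.choose (2 * Q) i : ℝ) * p ^ i * (1 - p) ^ (2 * Q - i) *
          (Real.tanh (|(Q : ℝ) - (i : ℝ)| * |Real.log (p / (1 - p))|)) ^ (2 * κ) =
      ∑ i ∈ Finset.range Q,
        (Nat.choose (2 * Q) i : ℝ) * (p * (1 - p)) ^ i *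
          ((1 - p) ^ (2 * Q - 2 * i) + p ^ (2 * Q - 2 * i)) ^ ((1 : ℤ) - 2 * κ) *
          ((1 - p) ^ (2 * Q - 2 * i) - p ^ (2 * Q - 2 * i)) ^ (2 * κ) :=
  binomial_tanh_even_moments_general p hp Q κ hκ
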